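/- arXiv:1205.4518 — 2 statements merged into one kernel-verified Lean document; each statement's English description precedes it below -/
import Mathlib

section
/- For probability measures f and g on E ⊆ ℝ^d with finite k-th moments, and for any k > 2, the quadratic Wasserstein distance W₂ (built from the Euclidean cost) satisfies W₂(f,g) ≤ 2^{3/2} · (M_k(f)+M_k(g))^{1/k} · W₁(f,g)^{1/2 - 1/k}, where W₁ is the Monge-Kantorovich distance built from the truncated distance d_E(x,y) = min(|x-y|,1). -/
open MeasureTheory ENNReal

noncomputable section

/-- Monge–Kantorovich transport "distance" with general cost `c`:
infimum over couplings of `μ` and `ν` of the integral of the cost. -/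
def Winf {α : Type*} [MeasurableSpace α] (c : α → α → ℝ≥0∞) (μ ν : Measure α) : ℝ≥0∞ :=
  ⨅ (π : Measure (α × α)) (_ : π.map Prod.fst = μ) (_ : π.map Prod.snd = ν),
    ∫⁻ p, c p.1 p.2 ∂π

/-- Truncated distance `d_E(x,y) = min(|x-y|, 1)`. -/
def dE {α : Type*} [PseudoEMetricSpace α] (x y : α) : ℝ≥0∞ := min (edist x y) 1

/-- Moment of order `k`: `M_k(f) = ∫ ⟨v⟩^k df`, `⟨v⟩ = (1+|v|²)^{1/2}`. -/
def Mk {d : ℕ} (k : ℝ) (f : Measure (EuclideanSpace ℝ (Fin d))) : ℝ≥0∞ :=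
  ∫⁻ v, ENNReal.ofReal ((1 + ‖v‖ ^ 2) ^ (k / 2)) ∂f

/-!
For `R ≥ 1` one has pointwise `|x-y|² ≤ R² min(|x-y|, 1) + R^{2-k} |x-y|^k`, and
`|x-y|^k ≤ 2^k (⟨x⟩^k + ⟨y⟩^k)`. Integrating against an arbitrary coupling gives
`W₂² ≤ R² W₁ + R^{2-k} 2^k (M_k(f) + M_k(g))`, and `R = 2 ((M_k(f) + M_k(g)) / W₁)^{1/k}` makes the
two terms equal. This needs `W₁ > 0`; when `W₁ = 0` the measures coincide, because `W₁` bounds the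
difference of the integrals of any bounded Lipschitz function, in particular of the thickened
indicators of a closed set.
-/

open scoped NNReal

section Transport

variable {α : Type*} [MeasurableSpace α]

lemma Winf_le_lintegral (c : α → α → ℝ≥0∞) {μ ν : Measure α} {π : Measure (α × α)}
    (h₁ : π.map Prod.fst = μ) (h₂ : π.map Prod.snd = ν) :
    Winf c μ ν ≤ ∫⁻ p, c p.1 p.2 ∂π :=
  iInf_le_of_le π (iInf₂_le h₁ h₂)

lemma Winf_swap_le (c : α → α → ℝ≥0∞) (μ ν : Measure α) :
    Winf (fun x y => c y x) ν μ ≤ Winf c μ ν := by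
  refine le_iInf fun π => le_iInf₂ fun h₁ h₂ => ?_
  refine (Winf_le_lintegral _ (π := π.map Prod.swap) ?_ ?_).trans_eq ?_
  · rwa [Measure.map_map measurable_fst measurable_swap]
  · rwa [Measure.map_map measurable_snd measurable_swap]
  · exact lintegral_map_equiv (fun p : α × α => c p.2 p.1) MeasurableEquiv.prodComm

lemma Winf_comm (c : α → α → ℝ≥0∞) (μ ν : Measure α) :
    Winf (fun x y => c y x) ν μ = Winf c μ ν :=
  le_antisymm (Winf_swap_le c μ ν) (Winf_swap_le _ ν μ)

lemma Winf_self_eq_zero {c : α → α → ℝ≥0∞} (hc : Measurable (Function.uncurry c))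
    (hdiag : ∀ x, c x x = 0) (μ : Measure α) : Winf c μ μ = 0 := by
  have hd : Measurable fun x : α => (x, x) := measurable_id.prodMk measurable_id
  refine nonpos_iff_eq_zero.mp ((Winf_le_lintegral c (π := μ.map fun x => (x, x)) ?_ ?_).trans ?_)
  · rw [Measure.map_map measurable_fst hd]; exact Measure.map_id
  · rw [Measure.map_map measurable_snd hd]; exact Measure.map_id
  · rw [lintegral_map (f := fun p : α × α => c p.1 p.2) hc hd]; simp [hdiag]

lemma Winf_le_one {c : α → α → ℝ≥0∞} (hc : ∀ x y, c x y ≤ 1) (μ ν : Measure α)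
    [IsProbabilityMeasure μ] [IsProbabilityMeasure ν] : Winf c μ ν ≤ 1 :=
  (Winf_le_lintegral c Measure.fst_prod Measure.snd_prod).trans <|
    (lintegral_mono fun (p : α × α) => hc p.1 p.2).trans_eq (by simp)

lemma lintegral_le_lintegral_add_mul_Winf {c : α → α → ℝ≥0∞} {μ ν : Measure α}
    {φ : α → ℝ≥0∞} (hφ : Measurable φ) {C : ℝ≥0∞} (hC₀ : C ≠ 0) (hC : C ≠ ∞)
    (h : ∀ x y, φ x ≤ φ y + C * c x y) :
    ∫⁻ x, φ x ∂μ ≤ ∫⁻ x, φ x ∂ν + C * Winf c μ ν := by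
  simp only [Winf, ENNReal.mul_iInf_of_ne hC₀ hC, ENNReal.add_iInf]
  refine le_iInf fun π => le_iInf₂ fun h₁ h₂ => ?_
  subst h₁ h₂
  have hφ₂ : Measurable fun p : α × α => φ p.2 := hφ.comp measurable_snd
  rw [lintegral_map hφ measurable_fst, lintegral_map hφ measurable_snd,
    ← lintegral_const_mul' _ _ hC, ← lintegral_add_left hφ₂]
  exact lintegral_mono fun p => h p.1 p.2

lemma Winf_le_mul_Winf_add {c c' : α → α → ℝ≥0∞} {μ ν : Measure α} {u : α → ℝ≥0∞}
    (hu : Measurable u) {A B : ℝ≥0∞} (hA₀ : A ≠ 0) (hA : A ≠ ∞) (hB : B ≠ ∞)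
    (h : ∀ x y, c' x y ≤ A * c x y + B * (u x + u y)) :
    Winf c' μ ν ≤ A * Winf c μ ν + B * (∫⁻ x, u x ∂μ + ∫⁻ x, u x ∂ν) := by
  conv_rhs => simp only [Winf, ENNReal.mul_iInf_of_ne hA₀ hA, ENNReal.iInf_add]
  refine le_iInf fun π => le_iInf₂ fun h₁ h₂ => (Winf_le_lintegral c' h₁ h₂).trans ?_
  subst h₁ h₂
  have hu₁ : Measurable fun p : α × α => u p.1 := hu.comp measurable_fst
  have hu₂ : Measurable fun p : α × α => B * (u p.1 + u p.2) :=
    (hu₁.add (hu.comp measurable_snd)).const_mul B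
  rw [lintegral_map hu measurable_fst, lintegral_map hu measurable_snd,
    ← lintegral_add_left hu₁, ← lintegral_const_mul' _ _ hA, ← lintegral_const_mul' _ _ hB,
    ← lintegral_add_right _ hu₂]
  exact lintegral_mono fun p => h p.1 p.2

end Transport

section TruncatedDistance

variable {α : Type*} [PseudoEMetricSpace α]

lemma dE_comm (x y : α) : dE x y = dE y x := by
  rw [dE, dE, edist_comm]

lemma dE_le_one (x y : α) : dE x y ≤ 1 :=
  min_le_right _ _

lemma coe_le_coe_add_mul_dE {φ : α → ℝ≥0} {L : ℝ≥0} (hφ : LipschitzWith L φ)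
    (hφ₁ : ∀ x, φ x ≤ 1) (x y : α) :
    (φ x : ℝ≥0∞) ≤ φ y + max (L : ℝ≥0∞) 1 * dE x y := by
  have hlip : (φ x : ℝ≥0∞) ≤ φ y + L * edist x y := by
    calc (φ x : ℝ≥0∞) ≤ φ y + edist (φ x) (φ y) := by
          rw [edist_nndist]; exact_mod_cast NNReal.le_add_nndist _ _
      _ ≤ φ y + L * edist x y := by gcongr; exact hφ.edist_le_mul x y
  rcases le_total (edist x y) 1 with h | h
  · rw [dE, min_eq_left h]
    exact hlip.trans (by gcongr; exact le_max_left _ _)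
  · rw [dE, min_eq_right h, mul_one]
    calc (φ x : ℝ≥0∞) ≤ 1 := by exact_mod_cast hφ₁ x
      _ ≤ φ y + max (L : ℝ≥0∞) 1 := le_add_left (le_max_right _ _)

variable [MeasurableSpace α] [OpensMeasurableSpace α]

lemma lintegral_eq_of_Winf_dE_eq_zero {μ ν : Measure α} (h : Winf dE μ ν = 0)
    {φ : α → ℝ≥0} {L : ℝ≥0} (hφ : LipschitzWith L φ) (hφ₁ : ∀ x, φ x ≤ 1) :
    ∫⁻ x, φ x ∂μ = ∫⁻ x, φ x ∂ν := by
  have h' : Winf dE ν μ = 0 := by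
    simpa only [dE_comm] using (Winf_comm dE μ ν).trans h
  have hmeas : Measurable fun x => (φ x : ℝ≥0∞) :=
    hφ.continuous.measurable.coe_nnreal_ennreal
  have hC₀ : max (L : ℝ≥0∞) 1 ≠ 0 := (zero_lt_one.trans_le (le_max_right _ _)).ne'
  have hC : max (L : ℝ≥0∞) 1 ≠ ∞ := max_ne_top ENNReal.coe_ne_top ENNReal.one_ne_top
  apply le_antisymm
  · simpa [h] using lintegral_le_lintegral_add_mul_Winf hmeas hC₀ hC
      (coe_le_coe_add_mul_dE hφ hφ₁) (μ := μ) (ν := ν)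
  · simpa [h'] using lintegral_le_lintegral_add_mul_Winf hmeas hC₀ hC
      (coe_le_coe_add_mul_dE hφ hφ₁) (μ := ν) (ν := μ)

lemma eq_of_Winf_dE_eq_zero [BorelSpace α] {μ ν : Measure α} [IsFiniteMeasure μ]
    [IsFiniteMeasure ν] (h : Winf dE μ ν = 0) : μ = ν := by
  have hδ : ∀ n : ℕ, 0 < 1 / ((n : ℝ) + 1) := fun n => Nat.one_div_pos_of_nat
  have hclosed : ∀ F : Set α, IsClosed F → μ F = ν F := fun F hF => by
    refine tendsto_nhds_unique ?_ (tendsto_lintegral_thickenedIndicator_of_isClosed ν hF hδ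
      tendsto_one_div_add_atTop_nhds_zero_nat)
    simpa only [lintegral_eq_of_Winf_dE_eq_zero h (lipschitzWith_thickenedIndicator (hδ _) F)
      (thickenedIndicator_le_one (hδ _) F)] using
      tendsto_lintegral_thickenedIndicator_of_isClosed μ hF hδ
        tendsto_one_div_add_atTop_nhds_zero_nat
  refine ext_of_generate_finite _ ?_ isPiSystem_isClosed hclosed (hclosed _ isClosed_univ)
  rw [BorelSpace.measurable_eq (α := α), borel_eq_generateFrom_isClosed]

end TruncatedDistance

section PointwiseBounds

lemma sq_le_mul_min_add_rpow {e R k : ℝ} (he : 0 ≤ e) (hR : 1 ≤ R) (hk : 2 ≤ k) :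
    e ^ 2 ≤ R ^ 2 * min e 1 + R ^ (2 - k) * e ^ k := by
  rcases le_or_gt e R with heR | heR
  · have hnear : e ^ 2 ≤ R ^ 2 * min e 1 := by
      rcases le_total e 1 with h | h
      · rw [min_eq_left h]
        nlinarith [mul_le_mul_of_nonneg_left h he, one_le_pow₀ (n := 2) hR]
      · rw [min_eq_right h]; nlinarith
    linarith [show 0 ≤ R ^ (2 - k) * e ^ k by positivity]
  · have hR₀ : 0 < R := by linarith
    have hfar : e ^ 2 ≤ R ^ (2 - k) * e ^ k :=
      calc e ^ 2 = e ^ (2 - k) * e ^ k := by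
            rw [← Real.rpow_add (hR₀.trans heR), sub_add_cancel, Real.rpow_two]
        _ ≤ R ^ (2 - k) * e ^ k := mul_le_mul_of_nonneg_right
            (Real.rpow_le_rpow_of_nonpos hR₀ heR.le (by linarith)) (by positivity)
    linarith [show 0 ≤ R ^ 2 * min e 1 by positivity]

lemma dist_rpow_le {E : Type*} [SeminormedAddCommGroup E] {k : ℝ} (hk : 0 ≤ k) (x y : E) :
    dist x y ^ k ≤ 2 ^ k * ((1 + ‖x‖ ^ 2) ^ (k / 2) + (1 + ‖y‖ ^ 2) ^ (k / 2)) := by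
  have hbracket : ∀ v : E, ‖v‖ ≤ √(1 + ‖v‖ ^ 2) ∧ (1 + ‖v‖ ^ 2) ^ (k / 2) = √(1 + ‖v‖ ^ 2) ^ k :=
    fun v => ⟨Real.le_sqrt_of_sq_le (by linarith),
      by rw [Real.sqrt_eq_rpow, ← Real.rpow_mul (by positivity)]; ring_nf⟩
  obtain ⟨hx, hx'⟩ := hbracket x
  obtain ⟨hy, hy'⟩ := hbracket y
  rw [hx', hy']
  set a := √(1 + ‖x‖ ^ 2)
  set b := √(1 + ‖y‖ ^ 2)
  have hmax : max a b ^ k ≤ a ^ k + b ^ k := by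
    rcases max_choice a b with h | h <;> rw [h]
    · linarith [show 0 ≤ b ^ k by positivity]
    · linarith [show 0 ≤ a ^ k by positivity]
  calc dist x y ^ k ≤ (2 * max a b) ^ k := by
        gcongr
        calc dist x y ≤ ‖x‖ + ‖y‖ := dist_le_norm_add_norm x y
          _ ≤ 2 * max a b := by linarith [le_max_left a b, le_max_right a b]
    _ = 2 ^ k * max a b ^ k := Real.mul_rpow (by norm_num) (by positivity)
    _ ≤ 2 ^ k * (a ^ k + b ^ k) := by gcongr

lemma edist_sq_le_mul_dE_add_moments {E : Type*} [SeminormedAddCommGroup E] {R k : ℝ}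
    (hR : 1 ≤ R) (hk : 2 ≤ k) (x y : E) :
    edist x y ^ 2 ≤ ENNReal.ofReal (R ^ 2) * dE x y + ENNReal.ofReal (R ^ (2 - k) * 2 ^ k) *
      (ENNReal.ofReal ((1 + ‖x‖ ^ 2) ^ (k / 2)) + ENNReal.ofReal ((1 + ‖y‖ ^ 2) ^ (k / 2))) := by
  rw [dE, edist_dist, ← ENNReal.ofReal_one, ← ENNReal.ofReal_min, ← ENNReal.ofReal_pow dist_nonneg,
    ← ENNReal.ofReal_add (by positivity) (by positivity), ← ENNReal.ofReal_mul (by positivity),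
    ← ENNReal.ofReal_mul (by positivity), ← ENNReal.ofReal_add (by positivity) (by positivity)]
  refine ENNReal.ofReal_le_ofReal ((sq_le_mul_min_add_rpow dist_nonneg hR hk).trans ?_)
  rw [mul_assoc (R ^ (2 - k))]
  gcongr
  exact dist_rpow_le (by linarith) x y

lemma one_le_Mk {d : ℕ} {k : ℝ} (hk : 0 ≤ k) (f : Measure (EuclideanSpace ℝ (Fin d)))
    [IsProbabilityMeasure f] : 1 ≤ Mk k f :=
  calc (1 : ℝ≥0∞) = ∫⁻ _, 1 ∂f := by simp
    _ ≤ Mk k f := lintegral_mono fun v => ENNReal.one_le_ofReal.mpr <|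
        Real.one_le_rpow (by nlinarith [sq_nonneg ‖v‖]) (by positivity)

end PointwiseBounds

lemma rpow_interpolation_optimum {m w k : ℝ} (hm : 0 < m) (hw : 0 < w) (hk : 0 < k) :
    (2 * (m / w) ^ (1 / k)) ^ 2 * w + (2 * (m / w) ^ (1 / k)) ^ (2 - k) * 2 ^ k * m =
      2 ^ 3 * m ^ (2 / k) * w ^ (1 - 2 / k) := by
  set t := (m / w) ^ (1 / k) with ht
  have ht₀ : 0 < t := by positivity
  have htk : t ^ k = m / w := by
    rw [ht, ← Real.rpow_mul (by positivity), one_div_mul_cancel hk.ne', Real.rpow_one]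
  have ht2 : t ^ 2 * w = m ^ (2 / k) * w ^ (1 - 2 / k) := by
    rw [ht, ← Real.rpow_natCast, ← Real.rpow_mul (by positivity), Real.div_rpow hm.le hw.le,
      Real.rpow_sub hw, Real.rpow_one]
    push_cast; field_simp
  have hfar : (2 * t) ^ (2 - k) * 2 ^ k * m = (2 * t) ^ 2 * w := by
    rw [Real.rpow_sub (by positivity), Real.mul_rpow (z := k) (by norm_num) ht₀.le, htk,
      Real.rpow_two]
    field_simp
  rw [hfar]
  linear_combination 8 * ht2

lemma Winf_edist_sq_le_mul_Winf_dE_add {d : ℕ} {k R : ℝ} (hR : 1 ≤ R) (hk : 2 ≤ k)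
    (f g : Measure (EuclideanSpace ℝ (Fin d))) :
    Winf (fun x y => edist x y ^ 2) f g ≤ ENNReal.ofReal (R ^ 2) * Winf dE f g +
      ENNReal.ofReal (R ^ (2 - k) * 2 ^ k) * (Mk k f + Mk k g) :=
  Winf_le_mul_Winf_add (by fun_prop) (ENNReal.ofReal_pos.mpr (by positivity)).ne'
    ENNReal.ofReal_ne_top ENNReal.ofReal_ne_top (edist_sq_le_mul_dE_add_moments hR hk)

lemma Winf_edist_sq_le {d : ℕ} {k : ℝ} (hk : 2 < k) (f g : Measure (EuclideanSpace ℝ (Fin d)))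
    [IsProbabilityMeasure f] [IsProbabilityMeasure g] (hW : Winf dE f g ≠ 0) :
    Winf (fun x y => edist x y ^ 2) f g ≤
      2 ^ (3 : ℝ) * (Mk k f + Mk k g) ^ (2 / k) * Winf dE f g ^ (1 - 2 / k) := by
  have hk₀ : 0 < k := by linarith
  have hθ : 0 < 1 - 2 / k := by rw [sub_pos, div_lt_one hk₀]; exact hk
  have hW₁ : Winf dE f g ≤ 1 := Winf_le_one dE_le_one f g
  have hW_top : Winf dE f g ≠ ∞ := ne_top_of_le_ne_top ENNReal.one_ne_top hW₁
  rcases eq_or_ne (Mk k f + Mk k g) ∞ with hM | hM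
  · rw [hM, ENNReal.top_rpow_of_pos (by positivity), ENNReal.mul_top (by positivity),
      ENNReal.top_mul (ENNReal.rpow_pos (pos_iff_ne_zero.mpr hW) hW_top).ne']
    exact le_top
  set m := (Mk k f + Mk k g).toReal
  set w := (Winf dE f g).toReal
  have hm : 1 ≤ m := by
    simpa using ENNReal.toReal_mono hM ((one_le_Mk hk₀.le f).trans le_self_add)
  have hw₀ : 0 < w := ENNReal.toReal_pos hW hW_top
  have hw₁ : w ≤ 1 := by simpa using ENNReal.toReal_mono ENNReal.one_ne_top hW₁
  set R := 2 * (m / w) ^ (1 / k)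
  have hR : 1 ≤ R := by
    have : 1 ≤ (m / w) ^ (1 / k) :=
      Real.one_le_rpow ((one_le_div hw₀).mpr (hw₁.trans hm)) (by positivity)
    linarith
  calc Winf (fun x y => edist x y ^ 2) f g
      ≤ ENNReal.ofReal (R ^ 2) * ENNReal.ofReal w +
          ENNReal.ofReal (R ^ (2 - k) * 2 ^ k) * ENNReal.ofReal m := by
        rw [ENNReal.ofReal_toReal hM, ENNReal.ofReal_toReal hW_top]
        exact Winf_edist_sq_le_mul_Winf_dE_add hR hk.le f g
    _ = ENNReal.ofReal (2 ^ 3 * m ^ (2 / k) * w ^ (1 - 2 / k)) := by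
        rw [← ENNReal.ofReal_mul (by positivity), ← ENNReal.ofReal_mul (by positivity),
          ← ENNReal.ofReal_add (by positivity) (by positivity),
          ← rpow_interpolation_optimum (by linarith) hw₀ hk₀]
    _ = 2 ^ (3 : ℝ) * (Mk k f + Mk k g) ^ (2 / k) * Winf dE f g ^ (1 - 2 / k) := by
        rw [ENNReal.ofReal_mul (by positivity), ENNReal.ofReal_mul (by positivity),
          ← ENNReal.ofReal_rpow_of_nonneg (by positivity) (by positivity),
          ← ENNReal.ofReal_rpow_of_nonneg (by positivity) hθ.le, ENNReal.ofReal_toReal hM,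
          ENNReal.ofReal_toReal hW_top]
        norm_num

/-- For probability measures `f, g` on `ℝ^d` and `k > 2`:
`W₂(f,g) ≤ 2^{3/2} (M_k(f)+M_k(g))^{1/k} W₁(f,g)^{1/2-1/k}`. -/
theorem stmt0 (d : ℕ) (k : ℝ) (hk : 2 < k)
    (f g : Measure (EuclideanSpace ℝ (Fin d)))
    [IsProbabilityMeasure f] [IsProbabilityMeasure g] :
    (Winf (fun x y => edist x y ^ 2) f g) ^ ((1 : ℝ) / 2) ≤
      (2 : ℝ≥0∞) ^ ((3 : ℝ) / 2) * (Mk k f + Mk k g) ^ (1 / k) *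
        (Winf dE f g) ^ (1 / 2 - 1 / k) := by
  rcases eq_or_ne (Winf dE f g) 0 with hW | hW
  · rw [eq_of_Winf_dE_eq_zero hW, Winf_self_eq_zero (continuous_edist.measurable.pow_const 2)
      (by simp) g, ENNReal.zero_rpow_of_pos (by norm_num)]
    exact zero_le
  calc Winf (fun x y => edist x y ^ 2) f g ^ ((1 : ℝ) / 2)
      ≤ (2 ^ (3 : ℝ) * (Mk k f + Mk k g) ^ (2 / k) * Winf dE f g ^ (1 - 2 / k)) ^ ((1 : ℝ) / 2) :=
        ENNReal.rpow_le_rpow (Winf_edist_sq_le hk f g hW) (by norm_num)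
    _ = _ := by
        rw [ENNReal.mul_rpow_of_nonneg _ _ (by norm_num),
          ENNReal.mul_rpow_of_nonneg _ _ (by norm_num), ← ENNReal.rpow_mul, ← ENNReal.rpow_mul, ← ENNReal.rpow_mul]
        ring_nf
end
end

section
/- The first marginal σ^N_1 of the uniform measure on the Kac sphere {|V|² = N} in ℝ^N has uniformly bounded Gaussian exponential moment: ∫_ℝ e^{v²/4} σ^N_1(dv) ≤ 6 for all N ≥ 5. -/
/-! Realise `σ^N` as the radial projection `√N X/|X|` of a standard Gaussian vector `X`.
With `x = X₀²` and `y = |X|² - X₀²`, the exponent `N x / (4 (x + y))` is at most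
`max (169x/400) (N/4 + x/4 - 2y/5)`, so `e^{v²/4}` is dominated by the sum of two exponentials
of diagonal quadratic forms in `X`. Since `E e^{bX₀²} = (1 - 2b)^{-1/2}`, their Gaussian
expectations are `√(200/31)` and `e^{N/4} √2 (5/9)^{(N-1)/2}`, and the latter is at most
`√2 e^{1/4}` because `e^{1/4} √(5/9) ≤ 1`. -/

open MeasureTheory ENNReal

noncomputable section

/-- Standard Gaussian product measure on `ℝ^N`. -/
def stdGaussianPi (N : ℕ) : Measure (Fin N → ℝ) :=
  Measure.pi fun _ => ProbabilityTheory.gaussianReal 0 1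

/-- Euclidean norm on `Fin N → ℝ`. -/
def enorm2 {N : ℕ} (V : Fin N → ℝ) : ℝ := Real.sqrt (∑ i, (V i) ^ 2)

/-- The uniform probability measure `σ^N` on the Kac sphere `{|V|² = N}`, realized as
the push-forward of the rotation-invariant standard Gaussian by the radial projection
`V ↦ √N·V/|V|`. -/
def kacSphere (N : ℕ) : Measure (Fin N → ℝ) :=
  (stdGaussianPi N).map (fun V => (Real.sqrt N / enorm2 V) • V)

open ProbabilityTheory Real

lemma gaussianPDFReal_zero_one_mul_exp_mul_sq (b x : ℝ) :
    gaussianPDFReal 0 1 x * exp (b * x ^ 2) = (√(2 * π))⁻¹ * exp (-(1 / 2 - b) * x ^ 2) := by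
  simp only [gaussianPDFReal, NNReal.coe_one, mul_one, sub_zero, mul_assoc, ← exp_add]
  ring_nf

lemma integrable_exp_mul_sq_gaussianReal {b : ℝ} (hb : b < 1 / 2) :
    Integrable (fun x => exp (b * x ^ 2)) (gaussianReal 0 1) := by
  rw [gaussianReal_of_var_ne_zero 0 one_ne_zero, integrable_withDensity_iff
    (measurable_gaussianPDF 0 1) (ae_of_all _ fun _ => gaussianPDF_lt_top)]
  simp_rw [toReal_gaussianPDF, mul_comm (exp _), gaussianPDFReal_zero_one_mul_exp_mul_sq]
  exact (integrable_exp_neg_mul_sq (by linarith)).const_mul _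

lemma integral_exp_mul_sq_gaussianReal {b : ℝ} (hb : b < 1 / 2) :
    ∫ x, exp (b * x ^ 2) ∂gaussianReal 0 1 = √((1 - 2 * b)⁻¹) := by
  rw [integral_gaussianReal_eq_integral_smul one_ne_zero]
  simp_rw [smul_eq_mul, gaussianPDFReal_zero_one_mul_exp_mul_sq]
  rw [integral_const_mul, integral_gaussian, ← sqrt_inv, ← sqrt_mul (by positivity)]
  congr 1
  have : 1 - 2 * b ≠ 0 := by linarith
  field_simp

lemma lintegral_ofReal_exp_sum_mul_sq_stdGaussianPi {N : ℕ} (b : Fin N → ℝ)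
    (hb : ∀ i, b i < 1 / 2) :
    ∫⁻ V, ENNReal.ofReal (exp (∑ i, b i * V i ^ 2)) ∂stdGaussianPi N
      = ENNReal.ofReal (∏ i, √((1 - 2 * b i)⁻¹)) := by
  have hint : Integrable (fun V : Fin N → ℝ => ∏ i, exp (b i * V i ^ 2)) (stdGaussianPi N) :=
    Integrable.fintype_prod fun i => integrable_exp_mul_sq_gaussianReal (hb i)
  simp_rw [exp_sum]
  rw [← ofReal_integral_eq_lintegral_ofReal hint (ae_of_all _ fun V => by positivity),
    stdGaussianPi, integral_fintype_prod_eq_prod (fun i x => exp (b i * x ^ 2))]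
  simp_rw [integral_exp_mul_sq_gaussianReal (hb _)]

@[fun_prop]
lemma measurable_enorm2 {N : ℕ} : Measurable (enorm2 : (Fin N → ℝ) → ℝ) := by
  unfold enorm2; fun_prop

lemma lintegral_map_kacSphere_eval {N : ℕ} (i : Fin N) {f : ℝ → ℝ≥0∞}
    (hf : Measurable f) :
    ∫⁻ v, f v ∂(kacSphere N).map (fun V => V i)
      = ∫⁻ V, f (√N / enorm2 V * V i) ∂stdGaussianPi N := by
  rw [kacSphere, Measure.map_map (measurable_pi_apply i) (by fun_prop),
    lintegral_map hf (by fun_prop)]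
  rfl

/- For `100 n ≥ 169 y` the second bound is `(x - 3y/10)² + (n - 169y/100) y ≥ 0`; otherwise
`n ≤ 169 (x + y) / 100` gives the first. -/
lemma mul_div_add_div_four_le_max {n x y : ℝ} (hn : 0 ≤ n) (hx : 0 ≤ x) (hy : 0 ≤ y) :
    n * x / (x + y) / 4 ≤ max (169 / 400 * x) (n / 4 + x / 4 - 2 / 5 * y) := by
  rw [div_div]
  rcases le_total (169 * y) (100 * n) with hc | hc
  · refine le_max_of_le_right (div_le_of_le_mul₀ (by positivity) (by linarith) ?_)
    nlinarith [sq_nonneg (x - 3 / 10 * y), mul_nonneg hy (sub_nonneg.2 hc)]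
  · refine le_max_of_le_left (div_le_of_le_mul₀ (by positivity) (by positivity) ?_)
    nlinarith [mul_nonneg hx (sub_nonneg.2 hc)]

lemma sq_sqrt_div_sqrt_mul {n s : ℝ} (hn : 0 ≤ n) (hs : 0 ≤ s) (v : ℝ) :
    (√n / √s * v) ^ 2 = n * v ^ 2 / s := by
  rw [mul_pow, div_pow, sq_sqrt hn, sq_sqrt hs]
  ring

lemma exp_radialProjection_sq_div_four_le {n : ℕ} (V : Fin (n + 1) → ℝ) :
    exp ((√((n + 1 : ℕ) : ℝ) / enorm2 V * V 0) ^ 2 / 4)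
      ≤ exp (∑ i, (Fin.cons (169 / 400) 0 : Fin (n + 1) → ℝ) i * V i ^ 2)
        + exp (((n + 1 : ℕ) : ℝ) / 4)
          * exp (∑ i, (Fin.cons (1 / 4) fun _ => -2 / 5 : Fin (n + 1) → ℝ) i * V i ^ 2) := by
  set y := ∑ j : Fin n, V j.succ ^ 2
  have hy : 0 ≤ y := by positivity
  have hsum : ∑ i, V i ^ 2 = V 0 ^ 2 + y := Fin.sum_univ_succ _
  have hquad₁ : ∑ i, (Fin.cons (169 / 400) 0 : Fin (n + 1) → ℝ) i * V i ^ 2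
      = 169 / 400 * V 0 ^ 2 := by
    simp [Fin.sum_univ_succ]
  have hquad₂ : ∑ i, (Fin.cons (1 / 4) fun _ => -2 / 5 : Fin (n + 1) → ℝ) i * V i ^ 2
      = 1 / 4 * V 0 ^ 2 - 2 / 5 * y := by
    simp only [Fin.sum_univ_succ, Fin.cons_zero, Fin.cons_succ, ← Finset.mul_sum, y]
    ring
  rw [enorm2, hsum, sq_sqrt_div_sqrt_mul (by positivity) (by positivity), hquad₁, hquad₂,
    ← exp_add]
  have hexponent := mul_div_add_div_four_le_max (n := ((n + 1 : ℕ) : ℝ)) (by positivity)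
    (sq_nonneg (V 0)) hy
  calc _ ≤ exp (max _ _) := exp_le_exp.2 hexponent
    _ = max (exp _) (exp _) := exp_monotone.map_max
    _ ≤ _ := (max_le_add_of_nonneg (exp_nonneg _) (exp_nonneg _)).trans_eq (by ring_nf)

lemma sqrt_add_exp_mul_sqrt_pow_le_six (n : ℕ) :
    √(200 / 31) + exp (((n + 1 : ℕ) : ℝ) / 4) * (√2 * √(5 / 9) ^ n) ≤ 6 := by
  have hexp : exp (1 / 4) ≤ 4 / 3 := by
    have := exp_bound_div_one_sub_of_interval (x := 1 / 4) (by norm_num) (by norm_num)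
    norm_num at this ⊢
    linarith
  have hq : exp (1 / 4) * √(5 / 9) ≤ 1 := by
    have hs : √(5 / 9) ≤ 3 / 4 := sqrt_le_iff.2 ⟨by norm_num, by norm_num⟩
    nlinarith [sqrt_nonneg (5 / 9), exp_nonneg (1 / 4)]
  have hsqrt200 : √(200 / 31) ≤ 3 := sqrt_le_iff.2 ⟨by norm_num, by norm_num⟩
  have hsqrt2 : √2 ≤ 3 / 2 := sqrt_le_iff.2 ⟨by norm_num, by norm_num⟩
  have hsplit : exp (((n + 1 : ℕ) : ℝ) / 4) * (√2 * √(5 / 9) ^ n)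
      = √2 * (exp (1 / 4) * (exp (1 / 4) * √(5 / 9)) ^ n) := by
    rw [mul_pow, ← exp_nat_mul,
      show ((n + 1 : ℕ) : ℝ) / 4 = 1 / 4 + n * (1 / 4) by push_cast; ring, exp_add]
    ring
  have hrest : √2 * (exp (1 / 4) * (exp (1 / 4) * √(5 / 9)) ^ n) ≤ 3 / 2 * (4 / 3 * 1) := by
    gcongr
    exact pow_le_one₀ (by positivity) hq
  linarith

/-- The first marginal `σ^N_1` of the uniform measure on the Kac sphere has uniformly
bounded Gaussian exponential moment: `∫ e^{v²/4} σ^N_1(dv) ≤ 6` for all `N ≥ 5`. -/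
theorem stmt17 (N : ℕ) (hN : 5 ≤ N) :
    (∫⁻ v, ENNReal.ofReal (Real.exp (v ^ 2 / 4))
        ∂((kacSphere N).map (fun V => V ⟨0, by omega⟩))) ≤ 6 := by
  obtain ⟨n, rfl⟩ : ∃ n, N = n + 1 := ⟨N - 1, by omega⟩
  rw [Fin.zero_eta, lintegral_map_kacSphere_eval _ (by fun_prop)]
  set b₁ : Fin (n + 1) → ℝ := Fin.cons (169 / 400) 0
  set b₂ : Fin (n + 1) → ℝ := Fin.cons (1 / 4) fun _ => -2 / 5
  have hb₁ : ∀ i, b₁ i < 1 / 2 := Fin.cases (by norm_num [b₁]) fun _ => by norm_num [b₁]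
  have hb₂ : ∀ i, b₂ i < 1 / 2 := Fin.cases (by norm_num [b₂]) fun _ => by norm_num [b₂]
  calc _ ≤ ∫⁻ V, (ENNReal.ofReal (exp (∑ i, b₁ i * V i ^ 2))
          + ENNReal.ofReal (exp (((n + 1 : ℕ) : ℝ) / 4))
            * ENNReal.ofReal (exp (∑ i, b₂ i * V i ^ 2))) ∂stdGaussianPi (n + 1) :=
        lintegral_mono fun V => by
          rw [← ofReal_mul (exp_nonneg _), ← ofReal_add (exp_nonneg _) (by positivity)]
          exact ofReal_le_ofReal (exp_radialProjection_sq_div_four_le V)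
    _ = ENNReal.ofReal
          (√(200 / 31) + exp (((n + 1 : ℕ) : ℝ) / 4) * (√2 * √(5 / 9) ^ n)) := by
        rw [lintegral_add_left (by fun_prop), lintegral_const_mul _ (by fun_prop),
          lintegral_ofReal_exp_sum_mul_sq_stdGaussianPi _ hb₁,
          lintegral_ofReal_exp_sum_mul_sq_stdGaussianPi _ hb₂]
        simp only [b₁, b₂, Fin.prod_univ_succ, Fin.cons_zero, Fin.cons_succ, Finset.prod_const,
          Finset.card_univ, Fintype.card_fin]
        rw [← ofReal_mul (exp_nonneg _), ← ofReal_add (by positivity) (by positivity)]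
        norm_num
    _ ≤ 6 := (ofReal_le_ofReal (sqrt_add_exp_mul_sqrt_pow_le_six n)).trans (by norm_num)
end
end
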